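/- For every integer n ≥ 1 and real r > 0, the Whitney sphere parameterization W restricted to S^n_r is a Lagrangian immersion: for every x ∈ S^n_r and all v, w ∈ ℝ^{n+1} with ⟨x, v⟩ = ⟨x, w⟩ = 0, one has ω(DW_x v, DW_x w) = 0 for the standard symplectic form ω on ℂ^n, and the restriction of DW_x to {v ∈ ℝ^{n+1} : ⟨x, v⟩ = 0} is injective. -/

import Mathlib

open scoped BigOperators RealInnerProductSpace

/-- Standard symplectic form on `ℂ^N`: `ω(u, v) = Im (∑ conj (u j) * v j)`. -/
noncomputable def stdSymp (N : ℕ) (u v : Fin N → ℂ) : ℝ :=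
  (∑ j, (starRingEnd ℂ) (u j) * v j).im

/-- The Whitney sphere parameterization `W : ℝ^{n+1} → ℂ^n`,
`W(x)_j = x_j + 2i·x_0·x_j` for `1 ≤ j ≤ n`. -/
noncomputable def whitney (n : ℕ) (x : EuclideanSpace ℝ (Fin (n + 1))) : Fin n → ℂ :=
  fun j => (x j.succ : ℂ) + 2 * Complex.I * (x 0 : ℂ) * (x j.succ : ℂ)

/-!
`DW_x v = (v_j + 2i (x_0 v_j + x_j v_0))_j`, so a direct computation gives
`ω(DW_x v, DW_x w) = 2 (w_0 ∑_{j ≥ 1} x_j v_j - v_0 ∑_{j ≥ 1} x_j w_j)`. For `v, w ⊥ x` the sums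
are `-x_0 v_0` and `-x_0 w_0`, and the two terms cancel. If `DW_x v = 0`, the real parts give
`v_j = 0` for `j ≥ 1` and the imaginary parts `x_j v_0 = 0`; tangency then adds `x_0 v_0 = 0`,
so `v_0 = 0` because `x ≠ 0`.
-/

theorem EuclideanSpace.inner_eq_mul_add_sum_succ {n : ℕ}
    (x v : EuclideanSpace ℝ (Fin (n + 1))) :
    ⟪x, v⟫ = x 0 * v 0 + ∑ j : Fin n, x j.succ * v j.succ := by
  simp [PiLp.inner_apply, Fin.sum_univ_succ, mul_comm]

section Whitney

variable {n : ℕ} (x : EuclideanSpace ℝ (Fin (n + 1)))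

theorem fderiv_whitney_apply (v : EuclideanSpace ℝ (Fin (n + 1))) (j : Fin n) :
    fderiv ℝ (whitney n) x v j =
      v j.succ + 2 * Complex.I * (x 0 * v j.succ + x j.succ * v 0) := by
  have hcoord (i : Fin (n + 1)) :
      HasFDerivAt (fun y : EuclideanSpace ℝ (Fin (n + 1)) => (y i : ℂ))
        (Complex.ofRealCLM.comp (EuclideanSpace.proj i)) x :=
    (Complex.ofRealCLM.comp (EuclideanSpace.proj i)).hasFDerivAt
  have hW (j : Fin n) : HasFDerivAt (fun y => whitney n y j) _ x :=
    (hcoord j.succ).add (((hcoord 0).const_mul (2 * Complex.I)).mul (hcoord j.succ))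
  rw [fderiv_pi fun j => (hW j).differentiableAt, ContinuousLinearMap.pi_apply, (hW j).fderiv]
  simp only [add_apply, ContinuousLinearMap.comp_apply, PiLp.proj_apply,
    Complex.ofRealCLM_apply, smul_apply, smul_eq_mul]
  ring

theorem stdSymp_fderiv_whitney (v w : EuclideanSpace ℝ (Fin (n + 1))) :
    stdSymp n (fderiv ℝ (whitney n) x v) (fderiv ℝ (whitney n) x w) =
      2 * (w 0 * ∑ j : Fin n, x j.succ * v j.succ - v 0 * ∑ j : Fin n, x j.succ * w j.succ) := by
  simp only [stdSymp, Complex.im_sum, fderiv_whitney_apply, Finset.mul_sum,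
    ← Finset.sum_sub_distrib]
  refine Finset.sum_congr rfl fun j _ => ?_
  simp only [map_add, map_mul, Complex.conj_ofReal, Complex.conj_I, Complex.mul_im,
    Complex.mul_re, Complex.add_re, Complex.add_im, Complex.neg_re, Complex.neg_im,
    Complex.conj_re, Complex.conj_im, Complex.ofReal_re, Complex.ofReal_im, Complex.re_ofNat,
    Complex.im_ofNat, Complex.I_re, Complex.I_im, mul_neg, neg_mul]
  ring

theorem fderiv_whitney_eq_zero (hx : x ≠ 0) {v : EuclideanSpace ℝ (Fin (n + 1))}
    (hv : ⟪x, v⟫ = 0) (hDv : fderiv ℝ (whitney n) x v = 0) : v = 0 := by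
  have hcoord (j : Fin n) : v j.succ = 0 ∧ x j.succ * v 0 = 0 := by
    have h := congrFun hDv j
    rw [fderiv_whitney_apply, Pi.zero_apply, Complex.ext_iff] at h
    simp only [Complex.add_re, Complex.add_im, Complex.mul_re, Complex.mul_im,
      Complex.ofReal_re, Complex.ofReal_im, Complex.re_ofNat, Complex.im_ofNat, Complex.I_re,
      Complex.I_im, Complex.zero_re, Complex.zero_im, mul_zero, mul_one, sub_self, sub_zero,
      zero_mul, add_zero, zero_add, mul_eq_zero, OfNat.ofNat_ne_zero, false_or] at h
    obtain ⟨hre, him⟩ := h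
    exact ⟨hre, by simpa [hre] using him⟩
  have hx0 : x 0 * v 0 = 0 := by
    simpa [(hcoord _).1] using (EuclideanSpace.inner_eq_mul_add_sum_succ x v).symm.trans hv
  have hv0 : v 0 = 0 := by
    by_contra hv0
    refine hx (PiLp.ext fun i => Fin.cases ?_ (fun j => ?_) i)
    · exact (mul_eq_zero.mp hx0).resolve_right hv0
    · exact (mul_eq_zero.mp (hcoord j).2).resolve_right hv0
  exact PiLp.ext fun i => Fin.cases hv0 (fun j => (hcoord j).1) i

end Whitney

theorem stmt6_general (n : ℕ) (r : ℝ) (hr : 0 < r)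
    (x : EuclideanSpace ℝ (Fin (n + 1))) (hx : ‖x‖ = r) :
    (∀ v w : EuclideanSpace ℝ (Fin (n + 1)), ⟪x, v⟫ = 0 → ⟪x, w⟫ = 0 →
      stdSymp n (fderiv ℝ (whitney n) x v) (fderiv ℝ (whitney n) x w) = 0) ∧
    Set.InjOn (fderiv ℝ (whitney n) x) {v | ⟪x, v⟫ = 0} := by
  have hx0 : x ≠ 0 := norm_pos_iff.mp (hx ▸ hr)
  refine ⟨fun v w hv hw => ?_, fun v hv w hw hvw => ?_⟩
  · have hsum (u : EuclideanSpace ℝ (Fin (n + 1))) (hu : ⟪x, u⟫ = 0) :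
        ∑ j : Fin n, x j.succ * u j.succ = -(x 0 * u 0) := by
      linarith [EuclideanSpace.inner_eq_mul_add_sum_succ x u]
    rw [stdSymp_fderiv_whitney, hsum v hv, hsum w hw]
    ring
  · have htan : ⟪x, v - w⟫ = 0 := by
      rw [inner_sub_right, hv, hw, sub_self]
    exact sub_eq_zero.mp (fderiv_whitney_eq_zero x hx0 htan (by rw [map_sub, hvw, sub_self]))

/-- The Whitney sphere parameterization restricted to the sphere `S^n_r` is a Lagrangian
immersion: on tangent vectors to the sphere its derivative is isotropic for the standard
symplectic form on `ℂ^n` and injective. -/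
theorem stmt6 (n : ℕ) (hn : 1 ≤ n) (r : ℝ) (hr : 0 < r)
    (x : EuclideanSpace ℝ (Fin (n + 1))) (hx : ‖x‖ = r) :
    (∀ v w : EuclideanSpace ℝ (Fin (n + 1)), ⟪x, v⟫ = 0 → ⟪x, w⟫ = 0 →
      stdSymp n (fderiv ℝ (whitney n) x v) (fderiv ℝ (whitney n) x w) = 0) ∧
    Set.InjOn (fderiv ℝ (whitney n) x) {v | ⟪x, v⟫ = 0} :=
  stmt6_general n r hr x hx
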